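/- arXiv:2001.05530 — 3 statements merged into one kernel-verified Lean document; each statement's English description precedes it below -/
import Mathlib

section
/- Let X be a real Banach space, D a symmetric dictionary, and E : X → ℝ a uniformly smooth convex Fréchet-differentiable function on a bounded set D_E = {x : E(x) ≤ E(0)} with modulus of smoothness ρ(u) = ρ(E,D_E,u). Let ε ≥ 0 and f^ε ∈ D_E with E(f^ε) ≤ inf_x E(x) + ε and f^ε/A ∈ A₁(D) for some A ≥ 1. Suppose G_{m-1}, G_m ∈ D_E and φ_m ∈ D satisfy the Weak Biorthogonal Greedy Algorithm conditions: ⟨−E'(G_{m-1}), φ_m⟩ ≥ t_m sup_{φ∈D}⟨−E'(G_{m-1}), φ⟩, E(G_m) ≤ inf_{λ≥0} E(G_{m-1}+λφ_m), and ⟨E'(G_{m-1}), G_{m-1}⟩ = 0. Then E(G_m) − E(f^ε) ≤ E(G_{m-1}) − E(f^ε) + inf_{λ≥0} ( −λ t_m A^{-1}(E(G_{m-1}) − E(f^ε)) + 2ρ(λ) ). -/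
open Set

/-- The modulus of smoothness of a function `E` on a set `S`. -/
noncomputable def modS {X : Type*} [NormedAddCommGroup X] [NormedSpace ℝ X]
    (E : X → ℝ) (S : Set X) (u : ℝ) : ℝ :=
  (1 / 2) * sSup ((fun p : X × X => |E (p.1 + u • p.2) + E (p.1 - u • p.2) - 2 * E p.1|)
    '' {p : X × X | p.1 ∈ S ∧ ‖p.2‖ = 1})

/-! The gradient inequality at `Gprev`, with `E' Gprev Gprev = 0`, gives
`E Gprev - E fε ≤ -E' Gprev fε`; as `A⁻¹ • fε` lies in the closed convex hull of the dictionary,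
the weak greedy choice turns this into `t A⁻¹ (E Gprev - E fε) ≤ -E' Gprev φm`. For a unit vector
`y`, bounding the second difference by `2ρ(λ)` and using the gradient inequality at `x - λ y` gives
`E (x + λ y) ≤ E x + λ E' x y + 2ρ(λ)`; convexity on a segment extends this to `‖φm‖ ≤ 1`, and the
line search bounds `E Gm` by every `E (Gprev + λ φm)`. -/

section

variable {X : Type*} [NormedAddCommGroup X] [NormedSpace ℝ X] {E : X → ℝ}

def secondDifferences (E : X → ℝ) (S : Set X) (u : ℝ) : Set ℝ :=
  (fun p : X × X => |E (p.1 + u • p.2) + E (p.1 - u • p.2) - 2 * E p.1|) ''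
    {p : X × X | p.1 ∈ S ∧ ‖p.2‖ = 1}

theorem modS_eq (E : X → ℝ) (S : Set X) (u : ℝ) :
    modS E S u = 1 / 2 * sSup (secondDifferences E S u) :=
  rfl

theorem modS_nonneg (E : X → ℝ) (S : Set X) (u : ℝ) : 0 ≤ modS E S u :=
  mul_nonneg (by norm_num) (Real.sSup_nonneg (by rintro _ ⟨p, -, rfl⟩; exact abs_nonneg _))

theorem modS_of_not_bddAbove {S : Set X} {u : ℝ} (h : ¬BddAbove (secondDifferences E S u)) :
    modS E S u = 0 := by
  rw [modS_eq, Real.sSup_of_not_bddAbove h, mul_zero]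

theorem secondDiff_le_two_mul_modS {S : Set X} {u : ℝ} (h : BddAbove (secondDifferences E S u))
    {x y : X} (hx : x ∈ S) (hy : ‖y‖ = 1) :
    E (x + u • y) + E (x - u • y) - 2 * E x ≤ 2 * modS E S u :=
  calc _ ≤ |E (x + u • y) + E (x - u • y) - 2 * E x| := le_abs_self _
    _ ≤ sSup (secondDifferences E S u) := le_csSup h ⟨(x, y), ⟨hx, hy⟩, rfl⟩
    _ = 2 * modS E S u := by rw [modS_eq]; ring

theorem ConvexOn.apply_add_smul_le (hE : ConvexOn ℝ univ E) (x z : X) {θ : ℝ} (h₀ : 0 ≤ θ)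
    (h₁ : θ ≤ 1) : E (x + θ • z) ≤ (1 - θ) * E x + θ * E (x + z) := by
  have h := hE.2 (mem_univ x) (mem_univ (x + z)) (sub_nonneg.2 h₁) h₀ (sub_add_cancel 1 θ)
  rwa [smul_eq_mul, smul_eq_mul, show (1 - θ) • x + θ • (x + z) = x + θ • z by module] at h

theorem ConvexOn.secondDiff_nonneg (hE : ConvexOn ℝ univ E) (x z : X) :
    0 ≤ E (x + z) + E (x - z) - 2 * E x := by
  have h := hE.2 (mem_univ (x + z)) (mem_univ (x - z)) (by norm_num : (0 : ℝ) ≤ 1 / 2)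
    (by norm_num : (0 : ℝ) ≤ 1 / 2) (by norm_num)
  rw [show (1 / 2 : ℝ) • (x + z) + (1 / 2 : ℝ) • (x - z) = x by module, smul_eq_mul,
    smul_eq_mul] at h
  linarith

theorem ConvexOn.secondDiff_mono (hE : ConvexOn ℝ univ E) (x y : X) {u v : ℝ} (hu : 0 ≤ u)
    (huv : u ≤ v) :
    E (x + u • y) + E (x - u • y) - 2 * E x ≤ E (x + v • y) + E (x - v • y) - 2 * E x := by
  have hΔ := hE.secondDiff_nonneg x (v • y)
  rcases hu.eq_or_lt with rfl | hu
  · simp only [zero_smul, add_zero, sub_zero]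
    linarith
  have hv : 0 < v := hu.trans_le huv
  have hθ : (u / v) • v • y = u • y := by rw [smul_smul, div_mul_cancel₀ _ hv.ne']
  have hθ₁ : u / v ≤ 1 := (div_le_one hv).2 huv
  have hplus := hE.apply_add_smul_le x (v • y) (div_nonneg hu.le hv.le) hθ₁
  have hminus := hE.apply_add_smul_le x (-(v • y)) (div_nonneg hu.le hv.le) hθ₁
  rw [hθ] at hplus
  rw [smul_neg, hθ, ← sub_eq_add_neg, ← sub_eq_add_neg] at hminus
  nlinarith [mul_nonneg (sub_nonneg.2 hθ₁) hΔ]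

theorem ConvexOn.bddAbove_secondDifferences_of_le (hE : ConvexOn ℝ univ E) {S : Set X}
    {u v : ℝ} (hu : 0 ≤ u) (huv : u ≤ v) (h : BddAbove (secondDifferences E S v)) :
    BddAbove (secondDifferences E S u) := by
  obtain ⟨M, hM⟩ := h
  refine ⟨M, ?_⟩
  rintro _ ⟨p, hp, rfl⟩
  have hv := hM ⟨p, hp, rfl⟩
  dsimp only at hv ⊢
  rw [abs_of_nonneg (hE.secondDiff_nonneg _ _)] at hv ⊢
  exact (hE.secondDiff_mono p.1 p.2 hu huv).trans hv

theorem ConvexOn.add_le_of_hasFDerivAt (hE : ConvexOn ℝ univ E) {E' : X →L[ℝ] ℝ} {x : X}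
    (hx : HasFDerivAt E E' x) (y : X) : E x + E' (y - x) ≤ E y := by
  set g : ℝ → ℝ := fun s => E (x + s • (y - x))
  have hg : HasDerivAt g (E' (y - x)) 0 := by
    have hline : HasDerivAt (fun s : ℝ => x + s • (y - x)) (y - x) 0 := by
      simpa using ((hasDerivAt_id (0 : ℝ)).smul_const (y - x)).const_add x
    exact hx.comp_hasDerivAt_of_eq 0 hline (by simp)
  have hgc : ConvexOn ℝ univ g := by
    simpa [g, Function.comp_def, AffineMap.lineMap_apply, add_comm] using
      hE.comp_affineMap (AffineMap.lineMap x y)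
  have hslope := hgc.le_slope_of_hasDerivAt (mem_univ 0) (mem_univ 1) one_pos hg
  simp only [slope_def_field, g, one_smul, add_sub_cancel, zero_smul, add_zero, sub_zero,
    div_one] at hslope
  linarith [map_sub E' y x]

theorem ConvexOn.bddBelow_range_of_isBounded_sublevel (hE : ConvexOn ℝ univ E)
    {E' : X →L[ℝ] ℝ} {x₀ : X} (h₀ : HasFDerivAt E E' x₀)
    (hb : Bornology.IsBounded {x | E x ≤ E x₀}) : BddBelow (range E) := by
  obtain ⟨R, hR⟩ := hb.exists_norm_le
  refine ⟨min (E x₀) (E x₀ - ‖E'‖ * (R + ‖x₀‖)), ?_⟩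
  rintro _ ⟨x, rfl⟩
  by_cases hx : E x ≤ E x₀
  · have hgrad := hE.add_le_of_hasFDerivAt h₀ x
    have hlin : |E' (x - x₀)| ≤ ‖E'‖ * (R + ‖x₀‖) :=
      (E'.le_opNorm _).trans (mul_le_mul_of_nonneg_left
        ((norm_sub_le _ _).trans (add_le_add_left (hR x hx) _)) (norm_nonneg _))
    linarith [min_le_right (E x₀) (E x₀ - ‖E'‖ * (R + ‖x₀‖)), (abs_le.1 hlin).1]
  · exact (min_le_left _ _).trans (not_le.1 hx).le

theorem ConvexOn.apply_add_smul_le_of_norm_eq_one (hE : ConvexOn ℝ univ E) {S : Set X}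
    {u : ℝ} (hu : BddAbove (secondDifferences E S u)) {E' : X →L[ℝ] ℝ} {x : X}
    (hx : HasFDerivAt E E' x) (hxS : x ∈ S) {y : X} (hy : ‖y‖ = 1) :
    E (x + u • y) ≤ E x + u * E' y + 2 * modS E S u := by
  have hsmooth := secondDiff_le_two_mul_modS hu hxS hy
  have hgrad := hE.add_le_of_hasFDerivAt hx (x - u • y)
  rw [sub_sub_cancel_left, map_neg, map_smul, smul_eq_mul] at hgrad
  linarith

theorem ConvexOn.apply_add_smul_le_of_norm_le_one (hE : ConvexOn ℝ univ E) {S : Set X}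
    {u : ℝ} (hu : BddAbove (secondDifferences E S u)) {E' : X →L[ℝ] ℝ} {x : X}
    (hx : HasFDerivAt E E' x) (hxS : x ∈ S) {φ : X} (hφ : ‖φ‖ ≤ 1) :
    E (x + u • φ) ≤ E x + u * E' φ + 2 * modS E S u := by
  rcases eq_or_ne φ 0 with rfl | hφ₀
  · simp [modS_nonneg]
  have hν : ‖φ‖ ≠ 0 := norm_ne_zero_iff.2 hφ₀
  set y := ‖φ‖⁻¹ • φ
  have hy : ‖y‖ = 1 := by simp [y, norm_smul, hν]
  have hφy : ‖φ‖ • y = φ := by simp [y, smul_smul, hν]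
  have hsegment := hE.apply_add_smul_le x (u • y) (norm_nonneg φ) hφ
  rw [smul_comm, hφy] at hsegment
  have hunit := hE.apply_add_smul_le_of_norm_eq_one hu hx hxS hy
  have hE'φ : u * E' φ = ‖φ‖ * (u * E' y) := by
    conv_lhs => rw [← hφy]
    rw [map_smul, smul_eq_mul]
    ring
  nlinarith [mul_le_mul_of_nonneg_left hunit (norm_nonneg φ),
    mul_nonneg (sub_nonneg.2 hφ) (modS_nonneg E S u)]

theorem ContinuousLinearMap.bddAbove_image_of_norm_le_one (F : X →L[ℝ] ℝ) {D : Set X}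
    (hD : ∀ g ∈ D, ‖g‖ ≤ 1) : BddAbove (F '' D) := by
  refine ⟨‖F‖, ?_⟩
  rintro _ ⟨g, hg, rfl⟩
  exact (le_abs_self _).trans ((F.le_opNorm g).trans (mul_le_of_le_one_right (norm_nonneg F) (hD g hg)))

theorem ContinuousLinearMap.apply_le_sSup_image_of_mem_closure_convexHull (F : X →L[ℝ] ℝ)
    {D : Set X} (hD : BddAbove (F '' D)) {x : X} (hx : x ∈ closure (convexHull ℝ D)) :
    F x ≤ sSup (F '' D) := by
  have hsub : D ⊆ {x | F x ≤ sSup (F '' D)} := fun g hg => le_csSup hD (mem_image_of_mem F hg)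
  exact closure_minimal (convexHull_min hsub (convex_halfSpace_le F.toLinearMap.isLinear _))
    (isClosed_le F.continuous continuous_const) hx

theorem ConvexOn.le_neg_apply_of_weakGreedy (hE : ConvexOn ℝ univ E) {E' : X →L[ℝ] ℝ} {G : X}
    (hG : HasFDerivAt E E' G) (hbio : E' G = 0) {D : Set X} (hD : ∀ g ∈ D, ‖g‖ ≤ 1) {A : ℝ}
    (hA : 0 ≤ A) {f : X} (hf : A⁻¹ • f ∈ closure (convexHull ℝ D)) {t : ℝ} (ht : 0 ≤ t)
    {φ : X} (hφ : (-E') φ ≥ t * sSup ((fun g => (-E') g) '' D)) :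
    t * A⁻¹ * (E G - E f) ≤ -E' φ := by
  have hA' : 0 ≤ A⁻¹ := inv_nonneg.2 hA
  have hgap : E G - E f ≤ (-E') f := by
    have hgrad := hE.add_le_of_hasFDerivAt hG f
    rw [map_sub, hbio, sub_zero] at hgrad
    simp only [neg_apply]
    linarith
  have hhull := (-E').apply_le_sSup_image_of_mem_closure_convexHull
    ((-E').bddAbove_image_of_norm_le_one hD) hf
  rw [map_smul, smul_eq_mul] at hhull
  calc t * A⁻¹ * (E G - E f) ≤ t * (A⁻¹ * (-E') f) := by rw [mul_assoc]; gcongr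
    _ ≤ t * sSup ((fun g => (-E') g) '' D) := by gcongr
    _ ≤ -E' φ := hφ

theorem ConvexOn.not_bddBelow_of_not_bddAbove_secondDifferences (hE : ConvexOn ℝ univ E)
    {S : Set X} {c : ℝ} (hc : 0 < c) {u₀ : ℝ} (hu₀ : 0 ≤ u₀)
    (h : ¬BddAbove (secondDifferences E S u₀)) :
    ¬BddBelow ((fun u => -u * c + 2 * modS E S u) '' Ici 0) := by
  rintro ⟨B, hB⟩
  set u := max u₀ ((|B| + 1) / c)
  have hu : u₀ ≤ u := le_max_left _ _
  have hmod : modS E S u = 0 :=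
    modS_of_not_bddAbove fun hb => h (hE.bddAbove_secondDifferences_of_le hu₀ hu hb)
  have hBu := hB ⟨u, hu₀.trans hu, rfl⟩
  have hcu : |B| + 1 ≤ u * c := (div_le_iff₀ hc).1 (le_max_right _ _)
  simp only [hmod] at hBu
  linarith [neg_abs_le B]

/- If a supremum in `modS E S u₀` is infinite, Lean's `sSup` makes `modS E S u = 0` for all
`u ≥ u₀`; for `c > 0` the set under the `sInf` is then unbounded below, its `sInf` is `0`, and the
claim reduces to `δ ≤ 0`. -/
theorem ConvexOn.le_sInf_neg_mul_add_two_mul_modS (hE : ConvexOn ℝ univ E) {S : Set X}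
    {δ c : ℝ} (hδ : δ ≤ 0)
    (hbound : ∀ u ≥ 0, BddAbove (secondDifferences E S u) → δ ≤ -u * c + 2 * modS E S u) :
    δ ≤ sInf ((fun u => -u * c + 2 * modS E S u) '' Ici 0) := by
  rcases le_or_gt c 0 with hc | hc
  · refine hδ.trans (Real.sInf_nonneg ?_)
    rintro _ ⟨u, hu, rfl⟩
    nlinarith [modS_nonneg E S u, mul_nonpos_of_nonneg_of_nonpos (mem_Ici.1 hu) hc]
  by_cases hS : ∀ u ≥ 0, BddAbove (secondDifferences E S u)
  · exact le_csInf ⟨_, mem_image_of_mem _ (mem_Ici.2 le_rfl)⟩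
      (by rintro _ ⟨u, hu, rfl⟩; exact hbound u hu (hS u hu))
  · push Not at hS
    obtain ⟨u₀, hu₀, hunb⟩ := hS
    rw [Real.sInf_of_not_bddBelow (hE.not_bddBelow_of_not_bddAbove_secondDifferences hc hu₀ hunb)]
    exact hδ

end

theorem stmt_8_general {X : Type*} [NormedAddCommGroup X] [NormedSpace ℝ X]
    (E : X → ℝ) (hE : ConvexOn ℝ Set.univ E)
    (E' : X → (X →L[ℝ] ℝ)) (hdiff : ∀ x, HasFDerivAt E (E' x) x)
    (Dic : Set X) (hDnorm : ∀ g ∈ Dic, ‖g‖ ≤ 1)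
    (DE : Set X) (hDE : DE = {x : X | E x ≤ E 0}) (hbdd : Bornology.IsBounded DE)
    (fε : X)
    (A : ℝ) (hA : 1 ≤ A) (hfεA : A⁻¹ • fε ∈ closure (convexHull ℝ Dic))
    (t : ℝ) (ht : t ∈ Set.Icc (0 : ℝ) 1)
    (Gprev Gm : X) (hGprev : Gprev ∈ DE) (φm : X) (hφm : φm ∈ Dic)
    (hgreedy : (-(E' Gprev)) φm ≥ t * sSup ((fun g => (-(E' Gprev)) g) '' Dic))
    (hreduction : E Gm ≤ sInf ((fun lam => E (Gprev + lam • φm)) '' Set.Ici (0 : ℝ)))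
    (hbio : E' Gprev Gprev = 0) :
    E Gm - E fε ≤ E Gprev - E fε +
      sInf ((fun lam => -lam * t * A⁻¹ * (E Gprev - E fε) + 2 * modS E DE lam)
        '' Set.Ici (0 : ℝ)) := by
  have hbelow : BddBelow (range E) :=
    hE.bddBelow_range_of_isBounded_sublevel (hdiff 0) (by rwa [hDE] at hbdd)
  have hray : ∀ u : ℝ, 0 ≤ u → E Gm ≤ E (Gprev + u • φm) := fun u hu =>
    hreduction.trans (csInf_le (hbelow.mono (by rintro _ ⟨v, -, rfl⟩; exact mem_range_self _))
      ⟨u, hu, rfl⟩)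
  have hdescent := hE.le_neg_apply_of_weakGreedy (hdiff Gprev) hbio hDnorm
    (zero_le_one.trans hA) hfεA ht.1 hgreedy
  set c := t * A⁻¹ * (E Gprev - E fε)
  have hfun : (fun lam => -lam * t * A⁻¹ * (E Gprev - E fε) + 2 * modS E DE lam) =
      fun u => -u * c + 2 * modS E DE u := by
    funext u; ring
  have hstep : E Gm - E Gprev ≤ sInf ((fun u => -u * c + 2 * modS E DE u) '' Ici 0) := by
    refine hE.le_sInf_neg_mul_add_two_mul_modS (by simpa using hray 0 le_rfl) fun u hu hb => ?_
    have hsmooth := hE.apply_add_smul_le_of_norm_le_one hb (hdiff Gprev) hGprev (hDnorm φm hφm)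
    linarith [hray u hu, mul_le_mul_of_nonneg_left hdescent hu]
  rw [hfun]
  linarith

/-- Error Reduction Lemma for the WBGA(co): one-step improvement for
an iteration of a Weak Biorthogonal Greedy Algorithm. -/
theorem stmt_8 {X : Type*} [NormedAddCommGroup X] [NormedSpace ℝ X] [CompleteSpace X]
    (E : X → ℝ) (hE : ConvexOn ℝ Set.univ E)
    (E' : X → (X →L[ℝ] ℝ)) (hdiff : ∀ x, HasFDerivAt E (E' x) x)
    (Dic : Set X) (hDnorm : ∀ g ∈ Dic, ‖g‖ ≤ 1)
    (hDdense : Dense (Submodule.span ℝ Dic : Set X))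
    (hDsymm : ∀ g ∈ Dic, -g ∈ Dic)
    (DE : Set X) (hDE : DE = {x : X | E x ≤ E 0}) (hbdd : Bornology.IsBounded DE)
    -- uniform smoothness of E on DE
    (husmooth : Filter.Tendsto (fun u => modS E DE u / u)
      (nhdsWithin 0 (Set.Ioi 0)) (nhds 0))
    (ε : ℝ) (hε : 0 ≤ ε) (fε : X) (hfεDE : fε ∈ DE)
    (hfε_min : E fε ≤ sInf (Set.range E) + ε)
    (A : ℝ) (hA : 1 ≤ A) (hfεA : A⁻¹ • fε ∈ closure (convexHull ℝ Dic))
    (t : ℝ) (ht : t ∈ Set.Icc (0 : ℝ) 1)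
    (Gprev Gm : X) (hGprev : Gprev ∈ DE) (hGm : Gm ∈ DE) (φm : X) (hφm : φm ∈ Dic)
    (hgreedy : (-(E' Gprev)) φm ≥ t * sSup ((fun g => (-(E' Gprev)) g) '' Dic))
    (hreduction : E Gm ≤ sInf ((fun lam => E (Gprev + lam • φm)) '' Set.Ici (0 : ℝ)))
    (hbio : E' Gprev Gprev = 0) :
    E Gm - E fε ≤ E Gprev - E fε +
      sInf ((fun lam => -lam * t * A⁻¹ * (E Gprev - E fε) + 2 * modS E DE lam)
        '' Set.Ici (0 : ℝ)) :=
  stmt_8_general E hE E' hdiff Dic hDnorm DE hDE hbdd fε A hA hfεA t ht Gprev Gm hGprev φm hφm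
    hgreedy hreduction hbio
end

section
/- Let ρ : [0,1] → ℝ be a nonnegative convex function with ρ(u)/u → 0 as u → 0⁺, let (α_k) be a nonnegative sequence with α_k → 0, and let v, B > 0. If a nonnegative sequence (a_m) satisfies a_m ≤ a_{m-1} + inf_{0≤λ≤1}( −λ v a_{m-1} + B ρ(λ) ) + α_m for all m ≥ 1, then a_m → 0 as m → ∞. -/
/-!
Given `ε > 0`, since `ρ(u) = o(u)` there is a step `λ ∈ (0, 1)` with `λ v < 1` and
`B ρ(λ) ≤ λ v ε / 4`. Testing the infimum at `λ`, and absorbing `α_m` once it is small, gives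
eventually `a_{m+1} ≤ (1 - λ v) a_m + λ v ε / 2`: a contraction with fixed point `ε / 2`,
so eventually `a_m < ε`.
-/

open Set Filter Topology

theorem eventually_lt_of_le_mul_add {a : ℕ → ℝ} {q η ε : ℝ} (hq₀ : 0 ≤ q) (hq₁ : q < 1)
    (ha : ∀ᶠ m in atTop, a (m + 1) ≤ q * a m + η) (hε : 0 < ε) :
    ∀ᶠ m in atTop, a m < η / (1 - q) + ε := by
  obtain ⟨N, hN⟩ := ha.exists_forall_of_atTop
  set L := η / (1 - q)
  have hfix : q * L + η = L := by
    simp only [L]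
    field_simp [(sub_pos.2 hq₁).ne']
    ring
  have hgeom : ∀ k, a (N + k) - L ≤ q ^ k * (a N - L) := by
    intro k
    induction k with
    | zero => simp
    | succ k ih =>
      calc a (N + (k + 1)) - L ≤ q * (a (N + k) - L) := by
            have := hN (N + k) (Nat.le_add_right N k)
            rw [← add_assoc]
            linarith
        _ ≤ q * (q ^ k * (a N - L)) := mul_le_mul_of_nonneg_left ih hq₀
        _ = q ^ (k + 1) * (a N - L) := by ring
  have hlim : Tendsto (fun k => q ^ k * (a N - L)) atTop (𝓝 0) := by
    simpa using (tendsto_pow_atTop_nhds_zero_of_lt_one hq₀ hq₁).mul_const (a N - L)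
  obtain ⟨K, hK⟩ := (hlim.eventually_lt_const hε).exists_forall_of_atTop
  refine eventually_atTop.2 ⟨N + K, fun m hm => ?_⟩
  obtain ⟨k, rfl⟩ := Nat.exists_eq_add_of_le hm
  have := hgeom (K + k)
  have := hK (K + k) (Nat.le_add_right K k)
  rw [add_assoc]
  linarith

theorem exists_mem_Ioo_le_mul_of_tendsto_div {ρ : ℝ → ℝ}
    (hρ : Tendsto (fun u => ρ u / u) (𝓝[>] 0) (𝓝 0)) {c r : ℝ} (hc : 0 < c) (hr : 0 < r) :
    ∃ u ∈ Ioo 0 r, ρ u ≤ c * u := by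
  obtain ⟨u, hu, hρu⟩ :=
    (Eventually.and (Ioo_mem_nhdsGT hr) (hρ.eventually (gt_mem_nhds hc))).exists
  refine ⟨u, hu, ?_⟩
  rw [div_lt_iff₀ hu.1] at hρu
  exact hρu.le

theorem sInf_image_Icc_le {ρ : ℝ → ℝ} (hρ : ∀ u ∈ Icc (0 : ℝ) 1, 0 ≤ ρ u) {v B x l : ℝ}
    (hvx : 0 ≤ v * x) (hB : 0 ≤ B) (hl : l ∈ Icc (0 : ℝ) 1) :
    sInf ((fun lam => -lam * v * x + B * ρ lam) '' Icc (0 : ℝ) 1) ≤ -l * v * x + B * ρ l := by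
  refine csInf_le ⟨-(v * x), ?_⟩ (mem_image_of_mem _ hl)
  rintro _ ⟨t, ht, rfl⟩
  have := mul_nonneg hB (hρ t ht)
  nlinarith [ht.2]

theorem stmt_9_general (ρ : ℝ → ℝ)
    (hρ_nonneg : ∀ u ∈ Set.Icc (0 : ℝ) 1, 0 ≤ ρ u)
    (hρ_o : Filter.Tendsto (fun u => ρ u / u) (nhdsWithin 0 (Set.Ioi 0)) (nhds 0))
    (α : ℕ → ℝ)
    (hα_lim : Filter.Tendsto α Filter.atTop (nhds 0))
    (v B : ℝ) (hv : 0 < v) (hB : 0 < B)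
    (a : ℕ → ℝ) (ha_nonneg : ∀ m, 0 ≤ a m)
    (hrec : ∀ m : ℕ, a (m + 1) ≤ a m +
      sInf ((fun lam => -lam * v * a m + B * ρ lam) '' Set.Icc (0 : ℝ) 1) + α (m + 1)) :
    Filter.Tendsto a Filter.atTop (nhds 0) := by
  refine tendsto_order.2 ⟨fun b hb => .of_forall fun m => hb.trans_le (ha_nonneg m),
    fun ε hε => ?_⟩
  obtain ⟨l, ⟨hl₀, hl⟩, hρl⟩ := exists_mem_Ioo_le_mul_of_tendsto_div hρ_o
    (by positivity : 0 < v * ε / (4 * B)) (by positivity : 0 < min 1 (1 / v))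
  have hl₁ : l ≤ 1 := (hl.trans_le (min_le_left _ _)).le
  have hlv : l * v < 1 := (lt_div_iff₀ hv).1 (hl.trans_le (min_le_right 1 (1 / v)))
  have hBρ : B * ρ l ≤ l * v * ε / 4 := by
    calc B * ρ l ≤ B * (v * ε / (4 * B) * l) := mul_le_mul_of_nonneg_left hρl hB.le
      _ = l * v * ε / 4 := by field_simp
  have hα : ∀ᶠ m in atTop, α (m + 1) ≤ l * v * ε / 4 :=
    (tendsto_add_atTop_nat 1).eventually (hα_lim.eventually (ge_mem_nhds (by positivity)))
  have hcontract : ∀ᶠ m in atTop, a (m + 1) ≤ (1 - l * v) * a m + l * v * ε / 2 := by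
    filter_upwards [hα] with m hαm
    have := sInf_image_Icc_le hρ_nonneg (mul_nonneg hv.le (ha_nonneg m)) hB.le ⟨hl₀.le, hl₁⟩
    linarith [hrec m]
  have hfix : l * v * ε / 2 / (1 - (1 - l * v)) + ε / 2 = ε := by
    field_simp [(mul_pos hl₀ hv).ne']
    ring
  simpa only [hfix] using
    eventually_lt_of_le_mul_add (by linarith) (by linarith [mul_pos hl₀ hv]) hcontract (half_pos hε)

/-- If `ρ` is nonnegative convex on `[0,1]` with `ρ(u)/u → 0` as `u → 0⁺`,
`α_k ≥ 0` with `α_k → 0`, `v, B > 0`, and a nonnegative sequence `(a_m)` satisfies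
`a_m ≤ a_{m-1} + inf_{0≤λ≤1}(−λ v a_{m-1} + B ρ(λ)) + α_m` for all `m ≥ 1`,
then `a_m → 0`. -/
theorem stmt_9 (ρ : ℝ → ℝ) (hρ_conv : ConvexOn ℝ (Set.Icc (0 : ℝ) 1) ρ)
    (hρ_nonneg : ∀ u ∈ Set.Icc (0 : ℝ) 1, 0 ≤ ρ u)
    (hρ_o : Filter.Tendsto (fun u => ρ u / u) (nhdsWithin 0 (Set.Ioi 0)) (nhds 0))
    (α : ℕ → ℝ) (hα_nonneg : ∀ k, 0 ≤ α k)
    (hα_lim : Filter.Tendsto α Filter.atTop (nhds 0))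
    (v B : ℝ) (hv : 0 < v) (hB : 0 < B)
    (a : ℕ → ℝ) (ha_nonneg : ∀ m, 0 ≤ a m)
    (hrec : ∀ m : ℕ, a (m + 1) ≤ a m +
      sInf ((fun lam => -lam * v * a m + B * ρ lam) '' Set.Icc (0 : ℝ) 1) + α (m + 1)) :
    Filter.Tendsto a Filter.atTop (nhds 0) :=
  stmt_9_general ρ hρ_nonneg hρ_o α hα_lim v B hv hB a ha_nonneg hrec
end

section
/- Let q ∈ (1,2], v ∈ (0,1], B > 0, c > 0. If a nonnegative sequence (a_m) satisfies a_m ≤ a_{m-1} + inf_{0≤λ≤1}( −λ v a_{m-1} + B λ^q ) + α_m with α_m ≤ c m^{−q} for all m ≥ 1, then there exists a constant C depending only on q, B, a_0, c such that a_m ≤ C v^{−q} m^{1−q} for all m ≥ 1. -/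
open Set

/-! Once `m ≥ q / v`, the choice `λ = q / (v m)` in the infimum turns the recursion into
`a_m ≤ (1 - q / m) a_{m-1} + D m^{-q}` with `D = B q^q v^{-q} + c`. By Bernoulli's inequality
`(1 - 1/m)^q ≥ 1 - q/m`, the sequence `K m^{1-q}` is a supersolution of this recursion as soon as
`K ≥ D`, so induction gives the bound from `m = ⌈q / v⌉` on; before that index `a_m ≤ a_0 + c m`. -/

theorem sInf_image_Icc_le_s10 {v a B q lam : ℝ} (hq : 0 ≤ q) (hlam : lam ∈ Icc (0 : ℝ) 1) :
    sInf ((fun lam => -lam * v * a + B * lam ^ q) '' Icc (0 : ℝ) 1) ≤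
      -lam * v * a + B * lam ^ q := by
  have hcont : Continuous fun lam : ℝ => -lam * v * a + B * lam ^ q := by
    have := Real.continuous_rpow_const hq
    fun_prop
  exact csInf_le (isCompact_Icc.image hcont).bddBelow (mem_image_of_mem _ hlam)

theorem sInf_image_Icc_nonpos {v a B q : ℝ} (hq : 0 < q) :
    sInf ((fun lam => -lam * v * a + B * lam ^ q) '' Icc (0 : ℝ) 1) ≤ 0 := by
  simpa [Real.zero_rpow hq.ne'] using
    sInf_image_Icc_le_s10 (v := v) (a := a) (B := B) hq.le (left_mem_Icc.2 zero_le_one)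

/-- The choice `λ = q / (v x)`. -/
theorem sInf_image_Icc_le_of_le_mul {v a B q x : ℝ} (hq : 0 < q) (hv : 0 < v)
    (hqvx : q ≤ v * x) :
    sInf ((fun lam => -lam * v * a + B * lam ^ q) '' Icc (0 : ℝ) 1) ≤
      -(q / x) * a + B * q ^ q * v ^ (-q) * x ^ (-q) := by
  have hx : 0 < x := pos_of_mul_pos_right (hq.trans_le hqvx) hv.le
  have hlam : q / (v * x) ∈ Icc (0 : ℝ) 1 := ⟨by positivity, (div_le_one (by positivity)).2 hqvx⟩
  convert sInf_image_Icc_le_s10 hq.le hlam using 1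
  rw [Real.div_rpow hq.le (by positivity), Real.mul_rpow hv.le hx.le, Real.rpow_neg hv.le,
    Real.rpow_neg hx.le]
  field_simp

theorem one_sub_div_mul_rpow_add_rpow_neg_le {q n : ℝ} (hq : 1 ≤ q) (hn : 0 < n) :
    (1 - q / (n + 1)) * n ^ (1 - q) + (n + 1) ^ (-q) ≤ (n + 1) ^ (1 - q) := by
  have hx : 0 < n + 1 := by linarith
  have bernoulli : 1 - q / (n + 1) ≤ (n / (n + 1)) ^ q := by
    have h := one_add_mul_self_le_rpow_one_add (s := -(n + 1)⁻¹)
      (by rw [neg_le_neg_iff]; exact inv_le_one_of_one_le₀ (by linarith)) hq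
    convert h using 2 <;> field_simp <;> ring
  calc (1 - q / (n + 1)) * n ^ (1 - q) + (n + 1) ^ (-q)
      ≤ (n / (n + 1)) ^ q * n ^ (1 - q) + (n + 1) ^ (-q) := by gcongr
    _ = (n + 1) ^ (1 - q) := by
      rw [Real.div_rpow hn.le hx.le, Real.rpow_neg hx.le, Real.rpow_sub hn, Real.rpow_sub hx,
        Real.rpow_one, Real.rpow_one]
      field_simp

theorem le_mul_rpow_sub_one_mul_rpow_one_sub {A q m N : ℝ} (hA : 0 ≤ A) (hq : 1 ≤ q)
    (hm : 0 < m) (hmN : m ≤ N) : A ≤ A * N ^ (q - 1) * m ^ (1 - q) := by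
  have hq' : 0 ≤ q - 1 := by linarith
  calc A = A * m ^ (q - 1) * m ^ (1 - q) := by rw [mul_assoc, ← Real.rpow_add hm]; norm_num
    _ ≤ A * N ^ (q - 1) * m ^ (1 - q) := by gcongr

theorem le_mul_rpow_one_sub_of_recurrence {b : ℕ → ℝ} {q A D : ℝ} {N : ℕ} (hq : 1 ≤ q)
    (hN : 1 ≤ N) (hqN : q ≤ N + 1) (hA : 0 ≤ A)
    (hbase : ∀ m, 1 ≤ m → m ≤ N → b m ≤ A)
    (hstep : ∀ n, N ≤ n → b (n + 1) ≤ (1 - q / (n + 1)) * b n + D * (n + 1) ^ (-q)) :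
    ∀ m, 1 ≤ m → b m ≤ max (A * N ^ (q - 1)) D * m ^ (1 - q) := by
  set K := max (A * (N : ℝ) ^ (q - 1)) D
  have hhead : ∀ m, 1 ≤ m → m ≤ N → b m ≤ K * m ^ (1 - q) := by
    intro m hm hmN
    calc b m ≤ A := hbase m hm hmN
      _ ≤ A * N ^ (q - 1) * m ^ (1 - q) :=
        le_mul_rpow_sub_one_mul_rpow_one_sub hA hq (by positivity) (by exact_mod_cast hmN)
      _ ≤ K * m ^ (1 - q) := by gcongr; exact le_max_left _ _
  have htail : ∀ n, N ≤ n → b n ≤ K * n ^ (1 - q) := by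
    refine Nat.le_induction (hhead N hN le_rfl) fun n hNn ih => ?_
    have hn : (0 : ℝ) < n := by exact_mod_cast hN.trans hNn
    have hNn' : (N : ℝ) ≤ n := by exact_mod_cast hNn
    have hcoef : 0 ≤ 1 - q / (n + 1) := by
      rw [sub_nonneg, div_le_one (by positivity)]; linarith
    calc b (n + 1) ≤ (1 - q / (n + 1)) * b n + D * (n + 1) ^ (-q) := hstep n hNn
      _ ≤ (1 - q / (n + 1)) * (K * n ^ (1 - q)) + K * (n + 1) ^ (-q) := by
        gcongr; exact le_max_right _ _
      _ = K * ((1 - q / (n + 1)) * n ^ (1 - q) + (n + 1) ^ (-q)) := by ring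
      _ ≤ K * (n + 1) ^ (1 - q) := by gcongr; exact one_sub_div_mul_rpow_add_rpow_neg_le hq hn
      _ = K * ((n + 1 : ℕ) : ℝ) ^ (1 - q) := by push_cast; rfl
  intro m hm
  rcases le_total m N with hmN | hNm
  exacts [hhead m hm hmN, htail m hNm]

theorem le_add_mul_of_forall_succ_le {b : ℕ → ℝ} {c : ℝ} (h : ∀ n, b (n + 1) ≤ b n + c)
    (m : ℕ) : b m ≤ b 0 + c * m := by
  induction m with
  | zero => simp
  | succ n ih => push_cast; linarith [h n]

/-- If a nonnegative sequence satisfies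
`a_m ≤ a_{m-1} + inf_{0≤λ≤1}(−λ v a_{m-1} + B λ^q) + α_m` with `α_m ≤ c m^{−q}`,
`q ∈ (1,2]`, `v ∈ (0,1]`, `B > 0`, `c > 0`, then `a_m ≤ C v^{−q} m^{1−q}`
for a constant `C = C(q, B, a_0, c)`. -/
theorem stmt_10 (q v B c : ℝ) (hq : q ∈ Set.Ioc (1 : ℝ) 2) (hv : v ∈ Set.Ioc (0 : ℝ) 1)
    (hB : 0 < B) (hc : 0 < c)
    (a α : ℕ → ℝ) (ha_nonneg : ∀ m, 0 ≤ a m)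
    (hα : ∀ m : ℕ, 1 ≤ m → α m ≤ c * (m : ℝ) ^ (-q))
    (hrec : ∀ m : ℕ, a (m + 1) ≤ a m +
      sInf ((fun lam => -lam * v * a m + B * lam ^ q) '' Set.Icc (0 : ℝ) 1) + α (m + 1)) :
    ∃ C : ℝ, 0 < C ∧ ∀ m : ℕ, 1 ≤ m → a m ≤ C * v ^ (-q) * (m : ℝ) ^ (1 - q) := by
  obtain ⟨hq1, -⟩ := hq
  obtain ⟨hv0, hv1⟩ := hv
  have hq0 : 0 < q := by linarith
  set N := ⌈q / v⌉₊
  have hqvN : q / v ≤ N := Nat.le_ceil _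
  have hqN : q ≤ N := (le_div_self hq0.le hv0 hv1).trans hqvN
  have hN : 1 ≤ N := by exact_mod_cast hq1.le.trans hqN
  have hαc : ∀ n : ℕ, α (n + 1) ≤ c := fun n => (hα (n + 1) (by omega)).trans
    (mul_le_of_le_one_right hc.le (Real.rpow_le_one_of_one_le_of_nonpos (by simp) (by linarith)))
  have hgrowth : ∀ m, a m ≤ a 0 + c * m := le_add_mul_of_forall_succ_le fun n => by
    linarith [hrec n, sInf_image_Icc_nonpos (v := v) (a := a n) (B := B) hq0, hαc n]
  have hstep : ∀ n : ℕ, N ≤ n → a (n + 1) ≤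
      (1 - q / (n + 1)) * a n + (B * q ^ q * v ^ (-q) + c) * (n + 1) ^ (-q) := by
    intro n hNn
    have hqvx : q ≤ v * (n + 1) := by
      have : (N : ℝ) ≤ n := by exact_mod_cast hNn
      rw [div_le_iff₀ hv0] at hqvN
      nlinarith
    have hinf := sInf_image_Icc_le_of_le_mul (a := a n) (B := B) hq0 hv0 hqvx
    have hαn := hα (n + 1) (by omega)
    push_cast at hαn
    linarith [hrec n]
  have hbound := le_mul_rpow_one_sub_of_recurrence (A := a 0 + c * N) hq1.le hN (by linarith)
    (add_nonneg (ha_nonneg 0) (by positivity))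
    (fun m _ hmN => (hgrowth m).trans (by gcongr)) hstep
  refine ⟨max ((a 0 + c * N) * N ^ (q - 1)) (B * q ^ q * v ^ (-q) + c) * v ^ q,
    by positivity, fun m hm => ?_⟩
  rw [mul_assoc _ (v ^ q), ← Real.rpow_add hv0, add_neg_cancel, Real.rpow_zero, mul_one]
  exact hbound m hm
end
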